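/- arXiv:1011.4208 — 2 statements merged into one kernel-verified Lean document; each statement's English description precedes it below -/
import Mathlib

section
/- If P is a polynomial in three variables with real coefficients such that P(e^x − 1, e^{x√2} − 1, e^{x√3} − 1) = 0 for all real x in some neighborhood of 0, then P is the zero polynomial. In other words, the functions e^x − 1, e^{x√2} − 1, e^{x√3} − 1 are algebraically independent over ℝ. -/
/-!
With `Q(X) = P(X - 1)` the hypothesis says that
`Q(e^x, e^{x√2}, e^{x√3}) = ∑ₘ qₘ e^{λₘ x}`, `λₘ = m₀ + m₁√2 + m₂√3`, vanishes near `0`.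
Since `1, √2, √3` are linearly independent over `ℚ`, distinct monomials `m` give distinct
frequencies `λₘ`. The `k`-th derivative at `0` of the sum is the power sum `∑ₘ qₘ λₘ^k`, so all
these vanish, and invertibility of the Vandermonde matrix of the `λₘ` forces every `qₘ = 0`.
-/

open Real Filter Topology

theorem Irrational.eq_zero_of_ratCast_add_ratCast_mul_eq_zero {s : ℝ} (hs : Irrational s)
    {a b : ℚ} (h : a + b * s = 0) : a = 0 ∧ b = 0 := by
  obtain rfl : b = 0 := by
    by_contra hb
    exact (hs.ratCast_mul hb).ne_rat (-a) (by push_cast; linarith)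
  simpa using h

theorem irrational_sqrt_three : Irrational √3 := by
  simpa using Nat.prime_three.irrational_sqrt

theorem irrational_sqrt_six : Irrational √6 := by
  simpa using irrational_sqrt_natCast_iff.mpr (by norm_num : ¬IsSquare 6)

theorem linearIndependent_one_sqrt_two_sqrt_three : LinearIndependent ℚ ![1, √2, √3] := by
  rw [Fintype.linearIndependent_iff]
  intro g hg
  simp only [Fin.sum_univ_three, Matrix.cons_val, Rat.smul_def, mul_one] at hg
  set a := g 0
  set b := g 1
  set c := g 2
  have hbc : b * c = 0 := by
    have hsq : (b * √2 + c * √3) ^ 2 = (a : ℝ) ^ 2 := by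
      rw [show b * √2 + c * √3 = -(a : ℝ) by linarith, neg_sq]
    -- squaring `b √2 + c √3 = -a` leaves a rational multiple of `√6 = √2 √3`
    have h6 := irrational_sqrt_six.eq_zero_of_ratCast_add_ratCast_mul_eq_zero
      (a := 2 * b ^ 2 + 3 * c ^ 2 - a ^ 2) (b := 2 * (b * c)) (by
        rw [show (6 : ℝ) = 2 * 3 by norm_num, sqrt_mul (by norm_num)]
        push_cast
        linear_combination hsq - b ^ 2 * sq_sqrt (show (0 : ℝ) ≤ 2 by norm_num)
          - c ^ 2 * sq_sqrt (show (0 : ℝ) ≤ 3 by norm_num))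
    exact (mul_eq_zero.mp h6.2).resolve_left two_ne_zero
  obtain ⟨ha, hb, hc⟩ : a = 0 ∧ b = 0 ∧ c = 0 := by
    rcases mul_eq_zero.mp hbc with hb | hc
    · obtain ⟨ha, hc⟩ := irrational_sqrt_three.eq_zero_of_ratCast_add_ratCast_mul_eq_zero
        (a := a) (b := c) (by simpa [hb] using hg)
      exact ⟨ha, hb, hc⟩
    · obtain ⟨ha, hb⟩ := irrational_sqrt_two.eq_zero_of_ratCast_add_ratCast_mul_eq_zero
        (a := a) (b := b) (by simpa [hc] using hg)
      exact ⟨ha, hb, hc⟩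
  intro i
  fin_cases i <;> assumption

theorem eq_zero_of_sum_mul_exp_eventuallyEq_zero {ι : Type*} [Fintype ι] {r c : ι → ℝ}
    (hr : Function.Injective r) (h : (fun x ↦ ∑ i, c i * exp (r i * x)) =ᶠ[𝓝 0] 0) :
    c = 0 := by
  have hmoment (k : ℕ) : ∑ i, c i * r i ^ k = 0 := by
    have hk := (h.iteratedDeriv k).eq_of_nhds
    rw [iteratedDeriv_fun_sum fun i _ ↦ by fun_prop] at hk
    simpa only [iteratedDeriv_const_mul_field, iteratedDeriv_exp_const_mul, mul_zero, exp_zero,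
      mul_one, iteratedDeriv_const_zero] using hk
  let e := (Fintype.equivFin ι).symm
  have hce : c ∘ e = 0 := Matrix.eq_zero_of_forall_pow_sum_mul_pow_eq_zero (hr.comp e.injective)
    fun k ↦ (e.sum_comp fun i ↦ c i * r i ^ (k : ℕ)).trans (hmoment k)
  ext i
  simpa using congrFun hce (e.symm i)

namespace MvPolynomial

variable {σ R : Type*}

theorem eval_bind₁ [CommSemiring R] (v : σ → R) (f : σ → MvPolynomial σ R) (p : MvPolynomial σ R) :
    eval v (bind₁ f p) = eval (fun i ↦ eval v (f i)) p :=
  eval₂Hom_bind₁ _ _ _ _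

theorem bind₁_X_sub_C_injective [CommRing R] (a : σ → R) :
    Function.Injective (bind₁ fun i ↦ X i - C (a i) : MvPolynomial σ R →ₐ[R] _) := by
  refine Function.LeftInverse.injective (g := bind₁ fun i ↦ X i + C (a i)) fun p ↦ ?_
  rw [← AlgHom.comp_apply, bind₁_comp_bind₁]
  simp

theorem eval_exp_mul (w : σ → ℝ) (Q : MvPolynomial σ ℝ) (x : ℝ) :
    eval (fun i ↦ exp (w i * x)) Q =
      ∑ m ∈ Q.support, Q.coeff m * exp (Finsupp.weight w m * x) := by
  rw [eval_eq]
  refine Finset.sum_congr rfl fun m _ ↦ ?_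
  rw [Finsupp.weight_apply, Finsupp.sum, Finset.sum_mul, exp_sum]
  congr 1
  refine Finset.prod_congr rfl fun i _ ↦ ?_
  rw [← exp_nat_mul, nsmul_eq_mul, mul_assoc]

theorem eq_zero_of_eval_exp_mul_eventuallyEq_zero {w : σ → ℝ} (hw : LinearIndependent ℕ w)
    {Q : MvPolynomial σ ℝ} (h : (fun x ↦ eval (fun i ↦ exp (w i * x)) Q) =ᶠ[𝓝 0] 0) :
    Q = 0 := by
  -- `Finsupp.weight w` is `linearCombination ℕ w`, whose injectivity is `LinearIndependent ℕ w`
  have hweight : Function.Injective fun m : Q.support ↦ Finsupp.weight w (m : σ →₀ ℕ) :=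
    (show Function.Injective (Finsupp.weight w : (σ →₀ ℕ) → ℝ) from hw).comp Subtype.val_injective
  have hcoeff := eq_zero_of_sum_mul_exp_eventuallyEq_zero (c := fun m : Q.support ↦ Q.coeff m)
    hweight (by simpa only [eval_exp_mul, ← Finset.sum_coe_sort Q.support] using h)
  rw [← support_eq_empty, Finset.eq_empty_iff_forall_notMem]
  exact fun m hm ↦ mem_support_iff.mp hm (congrFun hcoeff ⟨m, hm⟩)

end MvPolynomial

/-- If a real polynomial `P` in three variables satisfies
`P(e^x − 1, e^{x√2} − 1, e^{x√3} − 1) = 0` for all `x` in a neighbourhood of `0`,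
then `P = 0`: the functions `e^x − 1, e^{x√2} − 1, e^{x√3} − 1` are algebraically
independent over `ℝ`. -/
theorem stmt1 (P : MvPolynomial (Fin 3) ℝ) (ε : ℝ) (hε : 0 < ε)
    (h : ∀ x : ℝ, |x| < ε →
      MvPolynomial.eval
        ![exp x - 1, exp (x * Real.sqrt 2) - 1, exp (x * Real.sqrt 3) - 1] P = 0) :
    P = 0 := by
  refine MvPolynomial.bind₁_X_sub_C_injective (fun _ ↦ (1 : ℝ)) ?_
  rw [map_zero]
  refine MvPolynomial.eq_zero_of_eval_exp_mul_eventuallyEq_zero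
    (linearIndependent_one_sqrt_two_sqrt_three.restrict_scalars' ℕ) ?_
  filter_upwards [Metric.ball_mem_nhds 0 hε] with x hx
  rw [MvPolynomial.eval_bind₁, Pi.zero_apply]
  convert h x (by simpa using hx) using 3
  funext i
  fin_cases i <;> simp [mul_comm]
end

section
/- Let G : ℝ² → ℝ² be defined by G(x,y) = (y(e^{x√2} − 1), y(e^{x√3} − 1)). For sufficiently small ε > 0, G is injective on the set {(x,y) ∈ closedBall(0,ε) : xy ≠ 0}; that is, if G(x,y) = G(x',y') with (x,y),(x',y') in the closed ball of radius ε around 0 in ℝ² and xy ≠ 0, x'y' ≠ 0, then (x,y) = (x',y'). -/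
/-!
With `t = e^{x a}` and `c = b / a > 1` one has `e^{x b} = t ^ c`, so the ratio of the two
components of `(y (e^{x a} - 1), y (e^{x b} - 1))` is `(t ^ c - 1) / (t - 1)`, the slope of the
secant of the strictly convex function `t ↦ t ^ c` through `1`. Such slopes are strictly
increasing, so the ratio determines `t`, hence `x`, and then either component determines `y`.
In particular the map is injective on all of `{xy ≠ 0}`, so any radius `ε` works.
-/

open Real Set

theorem StrictConvexOn.strictMonoOn_secant {𝕜 : Type*} [Field 𝕜] [LinearOrder 𝕜]
    [IsStrictOrderedRing 𝕜] {s : Set 𝕜} {f : 𝕜 → 𝕜} (hf : StrictConvexOn 𝕜 s f) {a : 𝕜}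
    (ha : a ∈ s) : StrictMonoOn (fun x ↦ (f x - f a) / (x - a)) (s \ {a}) :=
  fun _ hx _ hy hxy ↦ hf.secant_strict_mono ha hx.1 hy.1 hx.2 hy.2 hxy

theorem injOn_exp_mul_sub_one_ratio {a b : ℝ} (ha : 0 < a) (hab : a < b) :
    InjOn (fun x ↦ (exp (x * b) - 1) / (exp (x * a) - 1)) {0}ᶜ := by
  have hc : 1 < b / a := (one_lt_div ha).2 hab
  have hsecant : InjOn (fun t : ℝ ↦ (t ^ (b / a) - 1 ^ (b / a)) / (t - 1)) (Ici 0 \ {1}) :=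
    ((strictConvexOn_rpow hc).strictMonoOn_secant (mem_Ici.2 zero_le_one)).injOn
  have hmaps : MapsTo (fun x ↦ exp (x * a)) {0}ᶜ (Ici 0 \ {1}) := fun x hx ↦
    ⟨(exp_pos _).le, by simpa [exp_eq_one_iff] using And.intro hx ha.ne'⟩
  refine (hsecant.comp ((exp_injective.comp (mul_left_injective₀ ha.ne')).injOn) hmaps).congr
    fun x _ ↦ ?_
  simp only [Function.comp_apply, one_rpow, ← exp_mul]
  rw [mul_assoc, mul_div_cancel₀ b ha.ne']

theorem eq_and_eq_of_mul_exp_sub_one_eq {a b : ℝ} (ha : 0 < a) (hab : a < b)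
    {x y x' y' : ℝ} (hx : x ≠ 0) (hx' : x' ≠ 0) (hy : y ≠ 0)
    (ha_eq : y * (exp (x * a) - 1) = y' * (exp (x' * a) - 1))
    (hb_eq : y * (exp (x * b) - 1) = y' * (exp (x' * b) - 1)) : x = x' ∧ y = y' := by
  have hden {z : ℝ} (hz : z ≠ 0) : exp (z * a) - 1 ≠ 0 := by
    simpa [sub_eq_zero, exp_eq_one_iff] using And.intro hz ha.ne'
  have hy' : y' ≠ 0 := by
    rintro rfl
    exact mul_ne_zero hy (hden hx) (by simpa using ha_eq)
  have hratio : (exp (x * b) - 1) / (exp (x * a) - 1) =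
      (exp (x' * b) - 1) / (exp (x' * a) - 1) := by
    rw [← mul_div_mul_left _ _ hy, ← mul_div_mul_left (exp (x' * b) - 1) _ hy', ha_eq, hb_eq]
  have hxx' : x = x' := injOn_exp_mul_sub_one_ratio ha hab hx hx' hratio
  subst hxx'
  exact ⟨rfl, mul_right_cancel₀ (hden hx) ha_eq⟩

/-- For sufficiently small `ε > 0`, the map `G(x,y) = (y(e^{x√2}−1), y(e^{x√3}−1))` is
injective on the part of the closed ball of radius `ε` around `0` in `ℝ²` where `xy ≠ 0`. -/
theorem stmt10 (G : EuclideanSpace ℝ (Fin 2) → EuclideanSpace ℝ (Fin 2))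
    (hG : ∀ p : EuclideanSpace ℝ (Fin 2),
      G p 0 = p 1 * (exp (p 0 * Real.sqrt 2) - 1) ∧
      G p 1 = p 1 * (exp (p 0 * Real.sqrt 3) - 1)) :
    ∃ ε > (0 : ℝ), ∀ p ∈ Metric.closedBall (0 : EuclideanSpace ℝ (Fin 2)) ε,
      ∀ q ∈ Metric.closedBall (0 : EuclideanSpace ℝ (Fin 2)) ε,
        p 0 * p 1 ≠ 0 → q 0 * q 1 ≠ 0 → G p = G q → p = q := by
  refine ⟨1, one_pos, fun p _ q _ hp hq hpq ↦ ?_⟩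
  obtain ⟨hp0, hp1⟩ := mul_ne_zero_iff.1 hp
  have h₀ : G p 0 = G q 0 := by rw [hpq]
  have h₁ : G p 1 = G q 1 := by rw [hpq]
  rw [(hG p).1, (hG q).1] at h₀
  rw [(hG p).2, (hG q).2] at h₁
  obtain ⟨hx, hy⟩ := eq_and_eq_of_mul_exp_sub_one_eq (sqrt_pos.2 two_pos)
    (sqrt_lt_sqrt zero_le_two (by norm_num)) hp0 (left_ne_zero_of_mul hq) hp1 h₀ h₁
  ext i
  fin_cases i
  exacts [hx, hy]
end
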